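/- If {T_P^n(I)}_{n<ω} is an α-chain, then T_{P,α}^ω(I) is the least upper bound of the chain with respect to ⊑_α: T_P^n(I) ⊑_α T_{P,α}^ω(I) for all n < ω, and for any interpretation J with T_P^n(I) ⊑_α J for all n < ω, we have T_{P,α}^ω(I) ⊑_α J. -/

import Mathlib

open Ordinal Set

noncomputable section
attribute [local instance] Classical.propDecidable

namespace IVS

/-- Countable ordinals: ordinals below `ω₁`. -/
abbrev Ord1 := {o : Ordinal.{0} // o < ω₁}

theorem zero_lt_omega1 : (0 : Ordinal) < ω₁ := omega_pos 1

theorem succ_lt_omega1 {o : Ordinal} (h : o < ω₁) : o + 1 < ω₁ := by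
  have := (Cardinal.isSuccLimit_omega 1).succ_lt h
  rwa [Order.succ_eq_add_one] at this

/-- zero as a countable ordinal -/
def O0 : Ord1 := ⟨0, zero_lt_omega1⟩

/-- successor on countable ordinals -/
def Ord1.succ (a : Ord1) : Ord1 := ⟨a.1 + 1, succ_lt_omega1 a.2⟩

/-- The truth domain `V`: `F_α < ⋯ < 0 < ⋯ < T_α` realized as a lexicographic sum. -/
abbrev TV := Ord1 ⊕ₗ (Unit ⊕ₗ Ord1ᵒᵈ)

/-- the false value `F_α` -/
def TV.F (a : Ord1) : TV := toLex (Sum.inl a)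
/-- the middle value `0` -/
def TV.Z : TV := toLex (Sum.inr (toLex (Sum.inl ())))
/-- the true value `T_α` -/
def TV.T (a : Ord1) : TV := toLex (Sum.inr (toLex (Sum.inr (OrderDual.toDual a))))

/-- the order of a truth value (`⊤` codes `+∞`, the order of `0`) -/
def ordOf (v : TV) : WithTop Ordinal :=
  match ofLex v with
  | .inl a => (a.1 : Ordinal)
  | .inr b =>
    match ofLex b with
    | .inl _ => ⊤
    | .inr a => ((OrderDual.ofDual a).1 : Ordinal)

/-- negation-as-failure: `¬F_α = T_{α+1}`, `¬T_α = F_{α+1}`, `¬0 = 0`. -/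
def negv (v : TV) : TV :=
  match ofLex v with
  | .inl a => TV.T a.succ
  | .inr b =>
    match ofLex b with
    | .inl _ => TV.Z
    | .inr a => TV.F (OrderDual.ofDual a).succ

/-- Literals of a propositional normal program (atoms are natural numbers). -/
inductive Lit where
  | pos (n : ℕ)
  | neg (n : ℕ)
  | tt
  | ff

/-- A normal program clause: a head atom and a body which is a conjunction of literals. -/
structure Clause where
  head : ℕ
  body : List Lit

/-- A (possibly infinite) propositional normal logic program. -/
abbrev Program := Set Clause

/-- Infinite-valued interpretations. -/
abbrev Interp := ℕ → TV

/-- the interpretation assigning `F₀` to every atom (denoted `∅` in the paper) -/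
def botI : Interp := fun _ => TV.F O0

def evalLit (I : Interp) : Lit → TV
  | .pos n => I n
  | .neg n => negv (I n)
  | .tt => TV.T O0
  | .ff => TV.F O0

/-- value of a body (conjunction evaluated by `min`; empty conjunction is `T₀`) -/
def evalBody (I : Interp) (b : List Lit) : TV :=
  (b.map (evalLit I)).foldr min (TV.T O0)

/-- least upper bound in `V` (well-defined by the lub-existence theorem) -/
def lub (S : Set TV) : TV := if h : ∃ v, IsLUB S v then h.choose else TV.Z

/-- the immediate consequence operator -/
def TP (P : Program) (I : Interp) : Interp :=
  fun p => lub {v | ∃ c ∈ P, c.head = p ∧ evalBody I c.body = v}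

/-- `I` is an (infinite-valued) model of `P` -/
def isModel (P : Program) (I : Interp) : Prop :=
  ∀ c ∈ P, evalBody I c.body ≤ I c.head

/-- the level set `I ∥ v` -/
def level (I : Interp) (v : TV) : Set ℕ := {p | I p = v}

/-- `I =_α J` -/
def eqA (α : Ord1) (I J : Interp) : Prop :=
  ∀ β ≤ α, level I (TV.T β) = level J (TV.T β) ∧ level I (TV.F β) = level J (TV.F β)

/-- `I ⊏_α J` -/
def sqltA (α : Ord1) (I J : Interp) : Prop :=
  (∀ β < α, eqA β I J) ∧
    ((level I (TV.T α) ⊂ level J (TV.T α) ∧ level J (TV.F α) ⊆ level I (TV.F α)) ∨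
     (level I (TV.T α) ⊆ level J (TV.T α) ∧ level J (TV.F α) ⊂ level I (TV.F α)))

/-- `I ⊑_α J` -/
def sqleA (α : Ord1) (I J : Interp) : Prop := eqA α I J ∨ sqltA α I J

/-- `I ⊏_∞ J` -/
def sqltInf (I J : Interp) : Prop := ∃ α : Ord1, sqltA α I J

/-- `I ⊑_∞ J` -/
def sqleInf (I J : Interp) : Prop := I = J ∨ sqltInf I J

/-- the sequence `T_P^n(I)` is an `α`-chain -/
def isChainA (P : Program) (α : Ord1) (I : Interp) : Prop :=
  ∀ n : ℕ, sqleA α ((TP P)^[n] I) ((TP P)^[n + 1] I)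

/-- the interpretation `T_{P,α}^ω(I)` -/
def TPomega (P : Program) (α : Ord1) (I : Interp) : Interp := fun p =>
  if ordOf (I p) < (α.1 : WithTop Ordinal) then I p
  else if ∃ n : ℕ, (TP P)^[n] I p = TV.T α then TV.T α
  else if ∀ n : ℕ, (TP P)^[n] I p = TV.F α then TV.F α
  else TV.F α.succ

/-- `⊔_{β<α} M_β` for a family defined below `α` -/
def sqcupI (α : Ord1) (f : ∀ β : Ordinal, β < α.1 → Interp) : Interp := fun p =>
  if h : ∃ β : Ordinal, ∃ hb : β < α.1, ordOf (f β hb p) = (β : WithTop Ordinal)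
  then f h.choose h.choose_spec.choose p
  else TV.F α

/-- the approximations `M_α` to the minimum model (junk values for `α ≥ ω₁`) -/
def MA (P : Program) (o : Ordinal) : Interp :=
  Ordinal.limitRecOn o
    (TPomega P O0 botI)
    (fun o' ih => if h : o' + 1 < ω₁ then TPomega P ⟨o' + 1, h⟩ ih else ih)
    (fun o' _ ih =>
      if h : o' < ω₁ then TPomega P ⟨o', h⟩ (sqcupI ⟨o', h⟩ ih) else botI)

/-- `M_α` for a countable ordinal `α` -/
def Mα (P : Program) (α : Ord1) : Interp := MA P α.1

/-- the defining property of the depth `δ` of a program -/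
def isDepth (P : Program) (δ : Ord1) : Prop :=
  (level (Mα P δ) (TV.T δ) = ∅ ∧ level (Mα P δ) (TV.F δ) = ∅) ∧
    ∀ β : Ord1, β < δ →
      (level (Mα P β) (TV.T β) ≠ ∅ ∨ level (Mα P β) (TV.F β) ≠ ∅)

/-- the depth of a program -/
def depth (P : Program) : Ord1 :=
  if h : ∃ δ : Ord1, isDepth P δ then h.choose else O0

/-- the minimum model `M_P` -/
def MP (P : Program) : Interp := fun p =>
  if ordOf (Mα P (depth P) p) < ((depth P).1 : WithTop Ordinal)
  then Mα P (depth P) p else TV.Z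

/-- the set of all infinite-valued models of `P` -/
def models (P : Program) : Set Interp := {I | isModel P I}

/-- `M ♯ α`: the part of `M` consisting of values of order `α` -/
def sharp (I : Interp) (α : Ord1) : Set (ℕ × TV) :=
  {pv | I pv.1 = pv.2 ∧ ordOf pv.2 = (α.1 : WithTop Ordinal)}

/-- `⨀^α S = ⋀^α S ∪ ⋁^α S` -/
def odot (α : Ord1) (S : Set Interp) : Set (ℕ × TV) :=
  {pv | (∃ p : ℕ, pv = (p, TV.T α) ∧ ∀ M ∈ S, M p = TV.T α) ∨
        (∃ p : ℕ, pv = (p, TV.F α) ∧ ∃ M ∈ S, M p = TV.F α)}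

/-- the sets `S_α` of the model intersection construction (junk for `α ≥ ω₁`) -/
def SA (P : Program) (o : Ordinal) : Set Interp :=
  Ordinal.limitRecOn o
    {M ∈ models P | sharp M O0 = odot O0 (models P)}
    (fun o' ih =>
      if h : o' + 1 < ω₁ then {M ∈ ih | sharp M ⟨o' + 1, h⟩ = odot ⟨o' + 1, h⟩ ih} else ih)
    (fun o' _ ih =>
      if h : o' < ω₁ then
        {M : Interp | M ∈ (⋂ (b : Ordinal) (hb : b < o'), ih b hb) ∧
          sharp M ⟨o', h⟩ = odot ⟨o', h⟩ (⋂ (b : Ordinal) (hb : b < o'), ih b hb)}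
      else ∅)

/-!
Along an `α`-chain the level sets of order below `α` never change, the `T_α`-level sets grow
and the `F_α`-level sets shrink. `T_{P,α}^ω(I)` keeps the values of `I` of order below `α` and
takes as its `T_α`- and `F_α`-level sets the union and the intersection of those of the chain,
so an interpretation is a `⊑_α`-upper bound of the chain exactly when it lies `⊑_α`-above
`T_{P,α}^ω(I)`.
-/

lemma TV.eq_F_or_eq_Z_or_eq_T (v : TV) : (∃ a, v = TV.F a) ∨ v = TV.Z ∨ ∃ a, v = TV.T a := by
  rcases v with a | (u | a)
  · exact Or.inl ⟨a, rfl⟩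
  · exact Or.inr (Or.inl rfl)
  · exact Or.inr (Or.inr ⟨OrderDual.ofDual a, rfl⟩)

@[simp] lemma TV.T_inj {a b : Ord1} : TV.T a = TV.T b ↔ a = b := by
  simp [TV.T]

@[simp] lemma TV.F_inj {a b : Ord1} : TV.F a = TV.F b ↔ a = b := by
  simp [TV.F]

@[simp] lemma TV.T_ne_F (a b : Ord1) : TV.T a ≠ TV.F b := by
  simp [TV.T, TV.F]

@[simp] lemma TV.F_ne_T (a b : Ord1) : TV.F a ≠ TV.T b := (TV.T_ne_F b a).symm

lemma Ord1.lt_succ (a : Ord1) : a < a.succ :=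
  show a.1 < a.1 + 1 from Order.lt_add_one_iff.2 le_rfl

@[simp] lemma ordOf_T (a : Ord1) : ordOf (TV.T a) = (a.1 : WithTop Ordinal) := rfl

@[simp] lemma ordOf_F (a : Ord1) : ordOf (TV.F a) = (a.1 : WithTop Ordinal) := rfl

@[simp] lemma ordOf_Z : ordOf TV.Z = ⊤ := rfl

lemma ordOf_eq_iff {v : TV} {β : Ord1} :
    ordOf v = (β.1 : WithTop Ordinal) ↔ v = TV.T β ∨ v = TV.F β := by
  rcases v.eq_F_or_eq_Z_or_eq_T with ⟨a, rfl⟩ | rfl | ⟨a, rfl⟩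
  · simp [Subtype.ext_iff, eq_comm]
  · rw [ordOf_Z]
    simp [TV.Z, TV.T, TV.F]
  · simp [Subtype.ext_iff, eq_comm]

lemma exists_ordOf_eq_of_lt {v : TV} {α : Ord1} (hv : ordOf v < (α.1 : WithTop Ordinal)) :
    ∃ β < α, ordOf v = (β.1 : WithTop Ordinal) := by
  rcases v.eq_F_or_eq_Z_or_eq_T with ⟨a, rfl⟩ | rfl | ⟨a, rfl⟩
  · exact ⟨a, by simpa using hv, rfl⟩
  · simp at hv
  · exact ⟨a, by simpa using hv, rfl⟩

def AgreeAt (β : Ord1) (I J : Interp) : Prop :=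
  level I (TV.T β) = level J (TV.T β) ∧ level I (TV.F β) = level J (TV.F β)

lemma AgreeAt.symm {β : Ord1} {I J : Interp} (h : AgreeAt β I J) : AgreeAt β J I :=
  ⟨h.1.symm, h.2.symm⟩

lemma AgreeAt.trans {β : Ord1} {I J K : Interp} (hIJ : AgreeAt β I J) (hJK : AgreeAt β J K) :
    AgreeAt β I K :=
  ⟨hIJ.1.trans hJK.1, hIJ.2.trans hJK.2⟩

lemma agreeAt_iff {β : Ord1} {I J : Interp} :
    AgreeAt β I J ↔ ∀ p, ordOf (I p) = (β.1 : WithTop Ordinal) ∨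
      ordOf (J p) = (β.1 : WithTop Ordinal) → I p = J p := by
  simp only [AgreeAt, level, Set.ext_iff, mem_ofPred_eq, ordOf_eq_iff]
  constructor
  · rintro ⟨hT, hF⟩ p (hp | hp) <;> rcases hp with hp | hp <;> simp_all
  · intro h
    exact ⟨fun p => ⟨fun hp => by rw [← h p (Or.inl (Or.inl hp)), hp],
      fun hp => by rw [h p (Or.inr (Or.inl hp)), hp]⟩,
      fun p => ⟨fun hp => by rw [← h p (Or.inl (Or.inr hp)), hp],
      fun hp => by rw [h p (Or.inr (Or.inr hp)), hp]⟩⟩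

lemma sqleA_iff {α : Ord1} {I J : Interp} :
    sqleA α I J ↔ (∀ β < α, AgreeAt β I J) ∧
      level I (TV.T α) ⊆ level J (TV.T α) ∧ level J (TV.F α) ⊆ level I (TV.F α) := by
  constructor
  · rintro (h | ⟨hlt, ⟨hT, hF⟩ | ⟨hT, hF⟩⟩)
    · exact ⟨fun β hβ => h β hβ.le, (h α le_rfl).1.subset, (h α le_rfl).2.symm.subset⟩
    · exact ⟨fun β hβ => hlt β hβ β le_rfl, hT.subset, hF⟩
    · exact ⟨fun β hβ => hlt β hβ β le_rfl, hT, hF.subset⟩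
  · rintro ⟨hlt, hT, hF⟩
    have hlt' : ∀ β < α, eqA β I J := fun β hβ γ hγ => hlt γ (hγ.trans_lt hβ)
    rcases Set.eq_or_ssubset_of_subset hT with hT' | hT'
    · rcases Set.eq_or_ssubset_of_subset hF with hF' | hF'
      · left
        intro β hβ
        rcases hβ.lt_or_eq with hβ | rfl
        · exact hlt β hβ
        · exact ⟨hT', hF'.symm⟩
      · exact Or.inr ⟨hlt', Or.inr ⟨hT, hF'⟩⟩
    · exact Or.inr ⟨hlt', Or.inl ⟨hT', hF⟩⟩

lemma isChainA.agreeAt_iterate {P : Program} {α β : Ord1} {I : Interp} (h : isChainA P α I)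
    (hβ : β < α) (n : ℕ) : AgreeAt β I ((TP P)^[n] I) := by
  induction n with
  | zero => exact ⟨rfl, rfl⟩
  | succ n ih => exact ih.trans ((sqleA_iff.1 (h n)).1 β hβ)

lemma TPomega_of_ordOf_lt {P : Program} {α : Ord1} {I : Interp} {p : ℕ}
    (hp : ordOf (I p) < (α.1 : WithTop Ordinal)) : TPomega P α I p = I p :=
  if_pos hp

lemma le_ordOf_TPomega {P : Program} {α : Ord1} {I : Interp} {p : ℕ}
    (hp : ¬ordOf (I p) < (α.1 : WithTop Ordinal)) :
    (α.1 : WithTop Ordinal) ≤ ordOf (TPomega P α I p) := by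
  simp only [TPomega, if_neg hp]
  split_ifs
  · simp
  · simp
  · simpa using (Ord1.lt_succ α).le

lemma agreeAt_TPomega {P : Program} {α β : Ord1} {I : Interp} (hβ : β < α) :
    AgreeAt β I (TPomega P α I) := by
  refine agreeAt_iff.2 fun p hp => (TPomega_of_ordOf_lt ?_).symm
  rcases hp with hp | hp
  · rw [hp]
    exact_mod_cast hβ
  · by_contra hI
    have := le_ordOf_TPomega (P := P) hI
    rw [hp] at this
    exact absurd (WithTop.coe_le_coe.1 this) (not_le.2 hβ)

lemma level_TPomega_T {P : Program} {α : Ord1} {I : Interp} (h : isChainA P α I) :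
    level (TPomega P α I) (TV.T α) = ⋃ n, level ((TP P)^[n] I) (TV.T α) := by
  ext p
  simp only [level, mem_ofPred_eq, mem_iUnion]
  by_cases hp : ordOf (I p) < (α.1 : WithTop Ordinal)
  · obtain ⟨β, hβ, hIp⟩ := exists_ordOf_eq_of_lt hp
    have hIp_ne : I p ≠ TV.T α := fun he => by simp [he] at hp
    have hiter : ∀ n, (TP P)^[n] I p = I p := fun n =>
      (agreeAt_iff.1 (h.agreeAt_iterate hβ n) p (Or.inl hIp)).symm
    simp [TPomega_of_ordOf_lt hp, hiter, hIp_ne]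
  · simp only [TPomega, if_neg hp]
    split_ifs with hT <;> simp [hT]

lemma level_TPomega_F {P : Program} {α : Ord1} {I : Interp} :
    level (TPomega P α I) (TV.F α) = ⋂ n, level ((TP P)^[n] I) (TV.F α) := by
  ext p
  simp only [level, mem_ofPred_eq, mem_iInter]
  by_cases hp : ordOf (I p) < (α.1 : WithTop Ordinal)
  · have hIp_ne : I p ≠ TV.F α := fun he => by simp [he] at hp
    simp only [TPomega_of_ordOf_lt hp, hIp_ne, false_iff, not_forall]
    exact ⟨0, hIp_ne⟩
  · simp only [TPomega, if_neg hp]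
    split_ifs with hT hF
    · obtain ⟨n, hn⟩ := hT
      exact ⟨fun he => absurd he (TV.T_ne_F _ _),
        fun hF => absurd (hn.symm.trans (hF n)) (TV.T_ne_F _ _)⟩
    · simpa using hF
    · simpa [(Ord1.lt_succ α).ne'] using hF

/-- `T_{P,α}^ω(I)` is the `⊑_α`-least upper bound of an `α`-chain `{T_P^n(I)}`. -/
theorem TPomega_lub_of_chain (P : Program) (α : Ord1) (I : Interp)
    (h : isChainA P α I) :
    (∀ n : ℕ, sqleA α ((TP P)^[n] I) (TPomega P α I)) ∧
    (∀ J : Interp, (∀ n : ℕ, sqleA α ((TP P)^[n] I) J) → sqleA α (TPomega P α I) J) := by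
  have hbelow : ∀ n, ∀ β < α, AgreeAt β ((TP P)^[n] I) (TPomega P α I) := fun n β hβ =>
    (h.agreeAt_iterate hβ n).symm.trans (agreeAt_TPomega hβ)
  refine ⟨fun n => sqleA_iff.2 ⟨hbelow n, ?_, ?_⟩, fun J hJ => sqleA_iff.2 ⟨?_, ?_, ?_⟩⟩
  · rw [level_TPomega_T h]
    exact subset_iUnion (fun n => level ((TP P)^[n] I) (TV.T α)) n
  · rw [level_TPomega_F]
    exact iInter_subset (fun n => level ((TP P)^[n] I) (TV.F α)) n
  · exact fun β hβ => (hbelow 0 β hβ).symm.trans ((sqleA_iff.1 (hJ 0)).1 β hβ)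
  · rw [level_TPomega_T h]
    exact iUnion_subset fun n => (sqleA_iff.1 (hJ n)).2.1
  · rw [level_TPomega_F]
    exact subset_iInter fun n => (sqleA_iff.1 (hJ n)).2.2

end IVS
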